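/- Let K be a number field with ring of integers ℤ_K and let 𝒫 be a finite set of prime numbers. For each p ∈ 𝒫 let 𝔞_p be a nonzero fractional ideal of K with v_𝔮(𝔞_p) = 0 for every prime ideal 𝔮 of ℤ_K not lying over p, let α_p ∈ K^* satisfy v_𝔭(α_p) = v_𝔭(𝔞_p) for every prime ideal 𝔭 lying over p and v_𝔮(α_p) ≥ 0 for every prime ideal 𝔮 not lying over p, and let H_p be an integer with H_p·e(𝔭/p) ≥ v_𝔭(𝔞_p) for every prime ideal 𝔭 lying over p. Then the fractional ideal Π_{p∈𝒫} 𝔞_p equals the fractional ideal generated by the two elements Π_{p∈𝒫} p^{H_p} and Σ_{p∈𝒫} ( Π_{q∈𝒫, q≠p} q^{H_q+1} )·α_p. -/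

import Mathlib

/-!
At a prime `𝔮` over `p₁ ∈ 𝒫` the other primes of `𝒫` are `𝔮`-units, so the summand of index `p₁`
of the second generator has valuation `v_𝔮(α_{p₁}) = v_𝔮(𝔞_{p₁}) ≤ H_{p₁} e(𝔮/p₁)`, while every
other summand is divisible by `p₁^{H_{p₁}+1}`; by the strict ultrametric inequality the second
generator has valuation `v_𝔮(𝔞_{p₁})`, and the first one has valuation `H_{p₁} e(𝔮/p₁)`. At a
prime over no `p ∈ 𝒫` the first generator is a unit and the second is integral. Hence at every
prime the minimum of the valuations of the two generators is the valuation of `Π 𝔞_p`, and a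
fractional ideal of a Dedekind domain is determined by its valuations.
-/

open IsDedekindDomain NumberField

/-- The additive `v`-adic valuation of a nonzero element `x` of the fraction field `K`
(the exponent of `v` in the factorization of the principal fractional ideal `xR`),
with junk value `0` at `x = 0`. -/
noncomputable def addVal {R : Type*} [CommRing R] [IsDedekindDomain R]
    {K : Type*} [Field K] [Algebra R K] [IsFractionRing R K]
    (v : HeightOneSpectrum R) (x : K) : ℤ :=
  if h : v.valuation K x = 0 then 0 else - Multiplicative.toAdd (WithZero.unzero h)

open FractionalIdeal HeightOneSpectrum WithZero
open scoped nonZeroDivisors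

section DedekindDomain

variable {R : Type*} [CommRing R] [IsDedekindDomain R]
    {K : Type*} [Field K] [Algebra R K] [IsFractionRing R K] (v : HeightOneSpectrum R)

theorem addVal_eq_neg_log (x : K) : addVal v x = -log (v.valuation K x) := by
  unfold addVal
  generalize v.valuation K x = w
  induction w using WithZero.recZeroCoe <;> simp [log]

theorem addVal_mul {x y : K} (hx : x ≠ 0) (hy : y ≠ 0) :
    addVal v (x * y) = addVal v x + addVal v y := by
  rw [addVal_eq_neg_log, addVal_eq_neg_log, addVal_eq_neg_log, map_mul,
    log_mul ((v.valuation K).ne_zero_iff.mpr hx) ((v.valuation K).ne_zero_iff.mpr hy), neg_add]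

theorem addVal_zpow (x : K) (n : ℤ) : addVal v (x ^ n) = n * addVal v x := by
  simp only [addVal_eq_neg_log, map_zpow₀, log_zpow, smul_eq_mul, mul_neg]

theorem addVal_lt_addVal_iff {x y : K} (hx : x ≠ 0) (hy : y ≠ 0) :
    addVal v x < addVal v y ↔ v.valuation K y < v.valuation K x := by
  rw [addVal_eq_neg_log, addVal_eq_neg_log, neg_lt_neg_iff,
    log_lt_log ((v.valuation K).ne_zero_iff.mpr hy) ((v.valuation K).ne_zero_iff.mpr hx)]

theorem addVal_nonneg_iff (x : K) : 0 ≤ addVal v x ↔ v.valuation K x ≤ 1 := by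
  rcases eq_or_ne x 0 with rfl | hx
  · simp [addVal_eq_neg_log]
  · rw [addVal_eq_neg_log, neg_nonneg, log_le_iff_le_exp ((v.valuation K).ne_zero_iff.mpr hx),
      exp_zero]

theorem addVal_natCast_pos {n : ℕ} (hn : (n : R) ≠ 0) (h : (n : R) ∈ v.asIdeal) :
    0 < addVal v (n : K) := by
  have hv : v.valuation K (n : K) ≠ 0 := by
    rw [← map_natCast (algebraMap R K), Valuation.ne_zero_iff]
    exact (map_ne_zero_iff _ (IsFractionRing.injective R K)).mpr hn
  rw [addVal_eq_neg_log, neg_pos, ← log_one, log_lt_log hv one_ne_zero,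
    ← map_natCast (algebraMap R K)]
  exact (valuation_lt_one_iff_mem v n).mpr h

theorem valuation_natCast_eq_one {n : ℕ} (h : (n : R) ∉ v.asIdeal) :
    v.valuation K (n : K) = 1 := by
  rw [← map_natCast (algebraMap R K)]
  exact (v.valuation_eq_one_iff_notMem).mpr h

theorem FractionalIdeal.count_spanSingleton {x : K} (hx : x ≠ 0) :
    count K v (spanSingleton R⁰ x) = addVal v x := by
  obtain ⟨n, d, hd, rfl⟩ := IsFractionRing.div_surjective R x
  have hn : n ≠ 0 := by rintro rfl; simp at hx
  have hd : d ≠ 0 := nonZeroDivisors.ne_zero hd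
  rw [count_well_defined K v (spanSingleton_ne_zero_iff.mpr hx) (a := d) (J := Ideal.span {n}),
    addVal_eq_neg_log, map_div₀, valuation_of_algebraMap, valuation_of_algebraMap,
    intValuation_if_neg _ hn, intValuation_if_neg _ hd, ← exp_sub, log_exp]
  · ring
  · rw [coeIdeal_span_singleton, spanSingleton_mul_spanSingleton, div_eq_inv_mul]

theorem FractionalIdeal.le_one_of_count_nonneg {M : FractionalIdeal R⁰ K} (hM : M ≠ 0)
    (h : ∀ v : HeightOneSpectrum R, 0 ≤ count K v M) : M ≤ 1 := by
  rw [← finprod_heightOneSpectrum_factorization' K hM]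
  refine finprod_induction (· ≤ 1) le_rfl (fun _ _ => mul_le_one') fun v => ?_
  lift count K v M to ℕ using h v with n
  rw [zpow_natCast, ← coeIdeal_pow]
  exact coeIdeal_le_one

theorem FractionalIdeal.le_of_count_le {I J : FractionalIdeal R⁰ K} (hI : I ≠ 0) (hJ : J ≠ 0)
    (h : ∀ v : HeightOneSpectrum R, count K v J ≤ count K v I) : I ≤ J := by
  have hIJ : I * J⁻¹ ≤ 1 :=
    le_one_of_count_nonneg (mul_ne_zero hI (inv_ne_zero hJ)) fun v => by
      rw [count_mul K v hI (inv_ne_zero hJ), count_inv]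
      linarith [h v]
  simpa [hJ, mul_comm I, ← mul_assoc] using mul_le_mul_right hIJ J

theorem valuation_sum_eq_of_addVal_lt {ι : Type*} [DecidableEq ι] {s : Finset ι} {f : ι → K}
    {i : ι} (hi : i ∈ s)
    (hf : ∀ j ∈ s, f j ≠ 0) (h : ∀ j ∈ s.erase i, addVal v (f i) < addVal v (f j)) :
    v.valuation K (∑ j ∈ s, f j) = v.valuation K (f i) := by
  rw [← Finset.add_sum_erase s f hi]
  refine Valuation.map_add_eq_of_lt_left _ (Valuation.map_sum_lt _
    ((v.valuation K).ne_zero_iff.mpr (hf i hi)) fun j hj => ?_)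
  exact (addVal_lt_addVal_iff v (hf i hi) (hf j (Finset.mem_of_mem_erase hj))).mp (h j hj)

theorem addVal_sum_nonneg {ι : Type*} {s : Finset ι} {f : ι → K}
    (h : ∀ j ∈ s, 0 ≤ addVal v (f j)) : 0 ≤ addVal v (∑ j ∈ s, f j) :=
  (addVal_nonneg_iff v _).mpr
    (Valuation.map_sum_le _ fun j hj => (addVal_nonneg_iff v _).mp (h j hj))

theorem valuation_prod_natCast_zpow_eq_one {S : Finset ℕ}
    (hS : ∀ p ∈ S, (p : R) ∉ v.asIdeal) (n : ℕ → ℤ) :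
    v.valuation K (∏ p ∈ S, (p : K) ^ n p) = 1 := by
  rw [map_prod]
  exact Finset.prod_eq_one fun p hp => by
    rw [map_zpow₀, valuation_natCast_eq_one v (hS p hp), one_zpow]

theorem addVal_prod_natCast_zpow_of_mem {S : Finset ℕ} {p : ℕ} (hp : p ∈ S)
    (hS : ∀ q ∈ S, q ≠ p → (q : R) ∉ v.asIdeal) (n : ℕ → ℤ) :
    addVal v (∏ q ∈ S, (q : K) ^ n q) = n p * addVal v (p : K) := by
  rw [addVal_eq_neg_log, ← Finset.mul_prod_erase S _ hp, map_mul,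
    valuation_prod_natCast_zpow_eq_one v
      (fun q hq => hS q (Finset.mem_of_mem_erase hq) (Finset.ne_of_mem_erase hq)),
    mul_one, ← addVal_eq_neg_log, addVal_zpow]

theorem addVal_sum_nonneg_of_forall_notMem {Ps : Finset ℕ}
    (hPs : ∀ p ∈ Ps, (p : R) ∉ v.asIdeal) {α : ℕ → K} (hα : ∀ p ∈ Ps, 0 ≤ addVal v (α p))
    (H : ℕ → ℤ) :
    0 ≤ addVal v (∑ p ∈ Ps, (∏ q ∈ Ps.erase p, (q : K) ^ (H q + 1)) * α p) := by
  refine addVal_sum_nonneg v fun p hp => ?_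
  rw [addVal_nonneg_iff, map_mul, valuation_prod_natCast_zpow_eq_one v
    (fun q hq => hPs q (Finset.mem_of_mem_erase hq)), one_mul, ← addVal_nonneg_iff]
  exact hα p hp

theorem FractionalIdeal.eq_spanSingleton_add_spanSingleton_of_count_eq_min
    {I : FractionalIdeal R⁰ K} (hI : I ≠ 0) {x y : K} (hx : x ≠ 0) (hy : y ≠ 0)
    (h : ∀ v : HeightOneSpectrum R, count K v I = min (addVal v x) (addVal v y)) :
    I = spanSingleton R⁰ x + spanSingleton R⁰ y := by
  have hX : spanSingleton R⁰ x ≠ 0 := spanSingleton_ne_zero_iff.mpr hx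
  have hY : spanSingleton R⁰ y ≠ 0 := spanSingleton_ne_zero_iff.mpr hy
  rw [← sup_eq_add]
  apply le_antisymm
  · refine le_of_count_le hI (ne_bot_of_le_ne_bot hX le_sup_left) fun v => ?_
    rw [h, le_min_iff, ← count_spanSingleton v hx, ← count_spanSingleton v hy]
    exact ⟨count_mono K v hX le_sup_left, count_mono K v hY le_sup_right⟩
  · refine sup_le (le_of_count_le hX hI fun v => ?_) (le_of_count_le hY hI fun v => ?_)
    · rw [h, count_spanSingleton v hx]
      exact min_le_left _ _
    · rw [h, count_spanSingleton v hy]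
      exact min_le_right _ _

end DedekindDomain

theorem Ideal.natCast_notMem_of_coprime {R : Type*} [CommRing R] {I : Ideal R} (hI : I ≠ ⊤)
    {p q : ℕ} (hpq : p.Coprime q) (hp : (p : R) ∈ I) : (q : R) ∉ I := by
  intro hq
  obtain ⟨a, b, hab⟩ := (Nat.Coprime.isCoprime hpq).intCast (R := R)
  push_cast at hab
  exact hI ((I.eq_top_iff_one).mpr
    (hab ▸ I.add_mem (I.mul_mem_left a hp) (I.mul_mem_left b hq)))

section NumberField

variable {K : Type*} [Field K] [NumberField K]

theorem exists_natCast_mem_heightOneSpectrum {p : ℕ} (hp : p.Prime) :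
    ∃ Q : HeightOneSpectrum (𝓞 K), (p : 𝓞 K) ∈ Q.asIdeal := by
  have := Fact.mk hp
  obtain ⟨Q, hQ, _⟩ :=
    Ideal.exists_maximal_ideal_liesOver_of_isIntegral (S := 𝓞 K) (Ideal.span {(p : ℤ)})
  have hpQ : (p : 𝓞 K) ∈ Q := by
    simpa using (Q.mem_of_liesOver _ (p : ℤ)).mp (Ideal.mem_span_singleton_self _)
  exact ⟨⟨Q, hQ.isPrime, fun h => hp.ne_zero (by simpa [h] using hpQ)⟩, hpQ⟩

theorem valuation_sum_eq_of_natCast_mem {Ps : Finset ℕ} (hPs : ∀ p ∈ Ps, p.Prime)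
    {α : ℕ → K} (hα : ∀ p ∈ Ps, α p ≠ 0) (H : ℕ → ℤ) {Q : HeightOneSpectrum (𝓞 K)} {p₁ : ℕ}
    (hp₁ : p₁ ∈ Ps) (hQ : (p₁ : 𝓞 K) ∈ Q.asIdeal)
    (hsep : ∀ q ∈ Ps, q ≠ p₁ → (q : 𝓞 K) ∉ Q.asIdeal)
    (hαQ : ∀ p ∈ Ps, p ≠ p₁ → 0 ≤ addVal Q (α p))
    (hH : addVal Q (α p₁) ≤ H p₁ * addVal Q (p₁ : K)) :
    Q.valuation K (∑ p ∈ Ps, (∏ q ∈ Ps.erase p, (q : K) ^ (H q + 1)) * α p) =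
      Q.valuation K (α p₁) := by
  have hprod : ∀ p ∈ Ps, ∏ q ∈ Ps.erase p, (q : K) ^ (H q + 1) ≠ 0 := fun p _ =>
    Finset.prod_ne_zero_iff.mpr fun q hq =>
      zpow_ne_zero _ (Nat.cast_ne_zero.mpr (hPs q (Finset.mem_of_mem_erase hq)).ne_zero)
  have he : 0 < addVal Q (p₁ : K) :=
    addVal_natCast_pos Q (Nat.cast_ne_zero.mpr (hPs p₁ hp₁).ne_zero) hQ
  rw [valuation_sum_eq_of_addVal_lt Q hp₁ (fun p hp => mul_ne_zero (hprod p hp) (hα p hp)),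
    map_mul, valuation_prod_natCast_zpow_eq_one Q
      (fun q hq => hsep q (Finset.mem_of_mem_erase hq) (Finset.ne_of_mem_erase hq)), one_mul]
  intro p hp
  obtain ⟨hne, hp⟩ := Finset.mem_erase.mp hp
  have hp₁' : p₁ ∈ Ps.erase p := Finset.mem_erase.mpr ⟨hne.symm, hp₁⟩
  rw [addVal_mul Q (hprod p₁ hp₁) (hα p₁ hp₁), addVal_mul Q (hprod p hp) (hα p hp),
    addVal_prod_natCast_zpow_of_mem Q hp₁'
      (fun q hq hq₁ => hsep q (Finset.mem_of_mem_erase hq) hq₁),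
    addVal_eq_neg_log Q (∏ q ∈ Ps.erase p₁, _), valuation_prod_natCast_zpow_eq_one Q
      (fun q hq => hsep q (Finset.mem_of_mem_erase hq) (Finset.ne_of_mem_erase hq)), log_one]
  linarith [hαQ p hp hne]

end NumberField

/-- two-element representation of a general fractional ideal
`Π_{p∈Ps} 𝔞_p = (Π_p p^{H_p})·ℤ_K + (Σ_p (Π_{q≠p} q^{H_q+1})·α_p)·ℤ_K`. -/
theorem stmt6 (K : Type*) [Field K] [NumberField K]
    (Ps : Finset ℕ) (hPs : ∀ p ∈ Ps, p.Prime)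
    (𝔞 : ℕ → FractionalIdeal (nonZeroDivisors (𝓞 K)) K)
    (h𝔞 : ∀ p ∈ Ps, 𝔞 p ≠ 0)
    (hsupp : ∀ p ∈ Ps, ∀ Q : HeightOneSpectrum (𝓞 K), (p : 𝓞 K) ∉ Q.asIdeal →
      FractionalIdeal.count K Q (𝔞 p) = 0)
    (α : ℕ → K) (hα : ∀ p ∈ Ps, α p ≠ 0)
    (hvα : ∀ p ∈ Ps, ∀ Q : HeightOneSpectrum (𝓞 K), (p : 𝓞 K) ∈ Q.asIdeal →
      addVal Q (α p) = FractionalIdeal.count K Q (𝔞 p))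
    (hvα' : ∀ p ∈ Ps, ∀ Q : HeightOneSpectrum (𝓞 K), (p : 𝓞 K) ∉ Q.asIdeal →
      0 ≤ addVal Q (α p))
    (H : ℕ → ℤ)
    (hH : ∀ p ∈ Ps, ∀ Q : HeightOneSpectrum (𝓞 K), (p : 𝓞 K) ∈ Q.asIdeal →
      FractionalIdeal.count K Q (𝔞 p) ≤ H p * addVal Q ((p : K))) :
    ∏ p ∈ Ps, 𝔞 p =
      FractionalIdeal.spanSingleton (nonZeroDivisors (𝓞 K))
          (∏ p ∈ Ps, (p : K) ^ (H p)) +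
        FractionalIdeal.spanSingleton (nonZeroDivisors (𝓞 K))
          (∑ p ∈ Ps, (∏ q ∈ Ps.erase p, (q : K) ^ (H q + 1)) * α p) := by
  classical
  rcases Ps.eq_empty_or_nonempty with rfl | ⟨p₀, hp₀⟩
  · simp
  have hsep : ∀ Q : HeightOneSpectrum (𝓞 K), ∀ p₁ ∈ Ps, (p₁ : 𝓞 K) ∈ Q.asIdeal →
      ∀ p ∈ Ps, p ≠ p₁ → (p : 𝓞 K) ∉ Q.asIdeal := fun Q p₁ hp₁ hQ p hp hne =>
    Ideal.natCast_notMem_of_coprime Q.isPrime.ne_top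
      ((Nat.coprime_primes (hPs p₁ hp₁) (hPs p hp)).mpr hne.symm) hQ
  have hval : ∀ Q : HeightOneSpectrum (𝓞 K), ∀ p₁ ∈ Ps, (p₁ : 𝓞 K) ∈ Q.asIdeal →
      Q.valuation K (∑ p ∈ Ps, (∏ q ∈ Ps.erase p, (q : K) ^ (H q + 1)) * α p) =
        Q.valuation K (α p₁) := fun Q p₁ hp₁ hQ =>
    valuation_sum_eq_of_natCast_mem hPs hα H hp₁ hQ (hsep Q p₁ hp₁ hQ)
      (fun p hp hne => hvα' p hp Q (hsep Q p₁ hp₁ hQ p hp hne))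
      ((hvα p₁ hp₁ Q hQ).trans_le (hH p₁ hp₁ Q hQ))
  have hs : ∑ p ∈ Ps, (∏ q ∈ Ps.erase p, (q : K) ^ (H q + 1)) * α p ≠ 0 := by
    obtain ⟨Q₀, hQ₀⟩ := exists_natCast_mem_heightOneSpectrum (K := K) (hPs p₀ hp₀)
    rw [← (Q₀.valuation K).ne_zero_iff, hval Q₀ p₀ hp₀ hQ₀, (Q₀.valuation K).ne_zero_iff]
    exact hα p₀ hp₀
  have hg : ∏ p ∈ Ps, (p : K) ^ (H p) ≠ 0 := Finset.prod_ne_zero_iff.mpr fun p hp =>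
    zpow_ne_zero _ (Nat.cast_ne_zero.mpr (hPs p hp).ne_zero)
  refine eq_spanSingleton_add_spanSingleton_of_count_eq_min
    (Finset.prod_ne_zero_iff.mpr h𝔞) hg hs fun Q => ?_
  rw [count_prod K Q Ps 𝔞 h𝔞]
  by_cases hQ : ∃ p₁ ∈ Ps, (p₁ : 𝓞 K) ∈ Q.asIdeal
  · obtain ⟨p₁, hp₁, hQ⟩ := hQ
    rw [Finset.sum_eq_single_of_mem p₁ hp₁ fun p hp hne =>
        hsupp p hp Q (hsep Q p₁ hp₁ hQ p hp hne),
      addVal_prod_natCast_zpow_of_mem Q hp₁ (hsep Q p₁ hp₁ hQ),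
      addVal_eq_neg_log Q (∑ p ∈ Ps, _), hval Q p₁ hp₁ hQ, ← addVal_eq_neg_log,
      hvα p₁ hp₁ Q hQ, min_eq_right (hH p₁ hp₁ Q hQ)]
  · push Not at hQ
    rw [Finset.sum_eq_zero fun p hp => hsupp p hp Q (hQ p hp),
      addVal_eq_neg_log Q (∏ p ∈ Ps, _), valuation_prod_natCast_zpow_eq_one Q hQ, log_one,
      neg_zero, min_eq_left (addVal_sum_nonneg_of_forall_notMem Q hQ
        (fun p hp => hvα' p hp Q (hQ p hp)) H)]
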